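/- Let n ≥ 2 and let F : ℝⁿ → ℝ be continuously differentiable on ℝⁿ \ {0}. Then for every torsion-type tensor T = (T^c_{ab}) (antisymmetric in a, b), every v ∈ ℝⁿ \ {0}, and every i ∈ {1,…,n}, the following identity holds: ½·Σ_{j,r} vʲ·( T^i_{jr} + T^j_{ir} − T^r_{ij} )·∂F/∂yʳ(v) = Σ_{a<b} Σ_c T^c_{ab}·σ_{c;i}^{ab}(v), where σ_{c;i}^{ab}(v) = ½( δᵢᶜ(vᵃ·∂F/∂yᵇ(v) − vᵇ·∂F/∂yᵃ(v)) + δᵢᵃ(vᶜ·∂F/∂yᵇ(v) − vᵇ·∂F/∂yᶜ(v)) − δᵢᵇ(vᶜ·∂F/∂yᵃ(v) − vᵃ·∂F/∂yᶜ(v)) ). -/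
import Mathlib


open Finset

/-- The `r`-th partial derivative of `F` at `v`. -/
noncomputable def pd {n : ℕ} (F : (Fin n → ℝ) → ℝ) (v : Fin n → ℝ) (r : Fin n) : ℝ :=
  fderiv ℝ F v (Pi.single r 1)

/-- The coefficient `σ_{c;i}^{ab}(v)` (with respect to an orthonormal basis). -/
noncomputable def sigmaT {n : ℕ} (F : (Fin n → ℝ) → ℝ)
    (v : Fin n → ℝ) (a b c i : Fin n) : ℝ :=
  (1 / 2) * ((if i = c then (1 : ℝ) else 0) * (v a * pd F v b - v b * pd F v a)
    + (if i = a then (1 : ℝ) else 0) * (v c * pd F v b - v b * pd F v c)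
    - (if i = b then (1 : ℝ) else 0) * (v c * pd F v a - v a * pd F v c))

/-- The torsion-dependent part of the compatibility condition equals the inner product
`⟨T, σᵢ(v)⟩ = Σ_{a<b} Σ_c T^c_{ab}·σ_{c;i}^{ab}(v)` (we write `T a b c` for `T^c_{ab}`). -/
theorem compat_sum_eq_inner_sigma {n : ℕ} (hn : 2 ≤ n)
    (F : (Fin n → ℝ) → ℝ)
    (hdiff : ContDiffOn ℝ 1 F {(0 : Fin n → ℝ)}ᶜ)
    (T : Fin n → Fin n → Fin n → ℝ)
    (hanti : ∀ a b c, T a b c = - T b a c)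
    (v : Fin n → ℝ) (hv : v ≠ 0) (i : Fin n) :
    (1 / 2) * ∑ j, ∑ r, v j * (T j r i + T i r j - T i j r) * pd F v r =
      ∑ a, ∑ b, ∑ c, if a < b then T a b c * sigmaT F v a b c i else 0 := by
  have hT0 : ∀ a c, T a a c = 0 := fun a c => by have := hanti a a c; linarith
  set p : Fin n → ℝ := pd F v with hp
  set S := ∑ j, ∑ r, v j * T j r i * p r with hS
  set A := ∑ j, ∑ r, v j * T i r j * p r with hA
  set B := ∑ j, ∑ r, v j * T i j r * p r with hB
  have hsig : ∀ a b c, sigmaT F v b a c i = - sigmaT F v a b c i := by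
    intro a b c; simp only [sigmaT]; ring
  -- LHS rewrite
  have hL : ∑ j, ∑ r, v j * (T j r i + T i r j - T i j r) * p r = S + A - B := by
    rw [hS, hA, hB, ← Finset.sum_add_distrib, ← Finset.sum_sub_distrib]
    refine Finset.sum_congr rfl fun j _ => ?_
    rw [← Finset.sum_add_distrib, ← Finset.sum_sub_distrib]
    exact Finset.sum_congr rfl fun r _ => by ring
  -- trichotomy pointwise
  have hpoint : ∀ a b : Fin n,
      (∑ c, T a b c * sigmaT F v a b c i)
        = (∑ c, if a < b then T a b c * sigmaT F v a b c i else 0)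
          + ∑ c, if b < a then T a b c * sigmaT F v a b c i else 0 := by
    intro a b
    rcases lt_trichotomy a b with h | h | h
    · simp [h, asymm h]
    · subst h; simp [hT0]
    · simp [h, asymm h]
  have hswapped : (∑ a, ∑ b, ∑ c, if b < a then T a b c * sigmaT F v a b c i else 0)
      = ∑ a, ∑ b, ∑ c, if a < b then T a b c * sigmaT F v a b c i else 0 := by
    rw [Finset.sum_comm]
    refine Finset.sum_congr rfl fun a _ => Finset.sum_congr rfl fun b _ =>
      Finset.sum_congr rfl fun c _ => ?_
    by_cases h : a < b
    · rw [if_pos h, if_pos h, hanti b a c, hsig a b c]; ring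
    · rw [if_neg h, if_neg h]
  have hfull : ∑ a, ∑ b, ∑ c, T a b c * sigmaT F v a b c i
      = 2 * ∑ a, ∑ b, ∑ c, (if a < b then T a b c * sigmaT F v a b c i else 0) := by
    calc ∑ a, ∑ b, ∑ c, T a b c * sigmaT F v a b c i
        = ∑ a, ∑ b, ((∑ c, if a < b then T a b c * sigmaT F v a b c i else 0)
            + ∑ c, if b < a then T a b c * sigmaT F v a b c i else 0) :=
          Finset.sum_congr rfl fun a _ => Finset.sum_congr rfl fun b _ => hpoint a b
      _ = (∑ a, ∑ b, ∑ c, if a < b then T a b c * sigmaT F v a b c i else 0)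
          + ∑ a, ∑ b, ∑ c, if b < a then T a b c * sigmaT F v a b c i else 0 := by
          simp [Finset.sum_add_distrib]
      _ = 2 * ∑ a, ∑ b, ∑ c, (if a < b then T a b c * sigmaT F v a b c i else 0) := by
          rw [hswapped]; ring
  -- pointwise expansion of sigmaT
  have hpt : ∀ a b c : Fin n, T a b c * sigmaT F v a b c i
      = (1/2) * ((if i = c then (1:ℝ) else 0) * (T a b c * (v a * p b - v b * p a)))
      + (1/2) * ((if i = a then (1:ℝ) else 0) * (T a b c * (v c * p b - v b * p c)))
      - (1/2) * ((if i = b then (1:ℝ) else 0) * (T a b c * (v c * p a - v a * p c))) := by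
    intro a b c; simp only [sigmaT]; ring
  have h1 : ∑ a, ∑ b, ∑ c, (if i = c then (1:ℝ) else 0) * (T a b c * (v a * p b - v b * p a))
      = 2 * S := by
    have e : ∀ a b : Fin n,
        (∑ c, (if i = c then (1:ℝ) else 0) * (T a b c * (v a * p b - v b * p a)))
        = T a b i * (v a * p b - v b * p a) := by
      intro a b; simp
    have e1 : (∑ a, ∑ b, T a b i * (v a * p b)) = S := by
      rw [hS]; exact Finset.sum_congr rfl fun a _ => Finset.sum_congr rfl fun b _ => by ring
    have e2 : (∑ a, ∑ b, T a b i * (v b * p a)) = - S := by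
      rw [Finset.sum_comm, hS]
      rw [show -(∑ j, ∑ r, v j * T j r i * p r) = ∑ j, ∑ r, -(v j * T j r i * p r) by
        simp [Finset.sum_neg_distrib]]
      refine Finset.sum_congr rfl fun b _ => Finset.sum_congr rfl fun a _ => ?_
      rw [hanti a b i]; ring
    calc ∑ a, ∑ b, ∑ c, (if i = c then (1:ℝ) else 0) * (T a b c * (v a * p b - v b * p a))
        = ∑ a, ∑ b, T a b i * (v a * p b - v b * p a) :=
          Finset.sum_congr rfl fun a _ => Finset.sum_congr rfl fun b _ => e a b
      _ = (∑ a, ∑ b, T a b i * (v a * p b)) - ∑ a, ∑ b, T a b i * (v b * p a) := by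
          simp [mul_sub, Finset.sum_sub_distrib]
      _ = 2 * S := by rw [e1, e2]; ring
  have h2 : ∑ a, ∑ b, ∑ c, (if i = a then (1:ℝ) else 0) * (T a b c * (v c * p b - v b * p c))
      = A - B := by
    have e : ∀ a : Fin n,
        (∑ b, ∑ c, (if i = a then (1:ℝ) else 0) * (T a b c * (v c * p b - v b * p c)))
        = (if i = a then (1:ℝ) else 0) * ∑ b, ∑ c, T a b c * (v c * p b - v b * p c) := by
      intro a; simp [Finset.mul_sum]
    have e1 : (∑ b, ∑ c, T i b c * (v c * p b)) = A := by
      rw [Finset.sum_comm, hA]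
      exact Finset.sum_congr rfl fun c _ => Finset.sum_congr rfl fun b _ => by ring
    have e2 : (∑ b, ∑ c, T i b c * (v b * p c)) = B := by
      rw [hB]
      exact Finset.sum_congr rfl fun b _ => Finset.sum_congr rfl fun c _ => by ring
    calc ∑ a, ∑ b, ∑ c, (if i = a then (1:ℝ) else 0) * (T a b c * (v c * p b - v b * p c))
        = ∑ a, (if i = a then (1:ℝ) else 0) * ∑ b, ∑ c, T a b c * (v c * p b - v b * p c) :=
          Finset.sum_congr rfl fun a _ => e a
      _ = ∑ b, ∑ c, T i b c * (v c * p b - v b * p c) := by simp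
      _ = (∑ b, ∑ c, T i b c * (v c * p b)) - ∑ b, ∑ c, T i b c * (v b * p c) := by
          simp [mul_sub, Finset.sum_sub_distrib]
      _ = A - B := by rw [e1, e2]
  have h3 : ∑ a, ∑ b, ∑ c, (if i = b then (1:ℝ) else 0) * (T a b c * (v c * p a - v a * p c))
      = B - A := by
    have e : ∀ a : Fin n,
        (∑ b, ∑ c, (if i = b then (1:ℝ) else 0) * (T a b c * (v c * p a - v a * p c)))
        = ∑ c, T a i c * (v c * p a - v a * p c) := by
      intro a
      calc ∑ b, ∑ c, (if i = b then (1:ℝ) else 0) * (T a b c * (v c * p a - v a * p c))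
          = ∑ b, (if i = b then (1:ℝ) else 0) * ∑ c, T a b c * (v c * p a - v a * p c) :=
            Finset.sum_congr rfl fun b _ => (Finset.mul_sum _ _ _).symm
        _ = ∑ c, T a i c * (v c * p a - v a * p c) := by simp
    have e1 : (∑ a, ∑ c, T a i c * (v c * p a)) = - A := by
      rw [Finset.sum_comm, hA]
      rw [show -(∑ j, ∑ r, v j * T i r j * p r) = ∑ j, ∑ r, -(v j * T i r j * p r) by
        simp [Finset.sum_neg_distrib]]
      refine Finset.sum_congr rfl fun c _ => Finset.sum_congr rfl fun a _ => ?_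
      rw [hanti a i c]; ring
    have e2 : (∑ a, ∑ c, T a i c * (v a * p c)) = - B := by
      rw [hB]
      rw [show -(∑ j, ∑ r, v j * T i j r * p r) = ∑ j, ∑ r, -(v j * T i j r * p r) by
        simp [Finset.sum_neg_distrib]]
      refine Finset.sum_congr rfl fun a _ => Finset.sum_congr rfl fun c _ => ?_
      rw [hanti a i c]; ring
    calc ∑ a, ∑ b, ∑ c, (if i = b then (1:ℝ) else 0) * (T a b c * (v c * p a - v a * p c))
        = ∑ a, ∑ c, T a i c * (v c * p a - v a * p c) :=
          Finset.sum_congr rfl fun a _ => e a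
      _ = (∑ a, ∑ c, T a i c * (v c * p a)) - ∑ a, ∑ c, T a i c * (v a * p c) := by
          simp [mul_sub, Finset.sum_sub_distrib]
      _ = B - A := by rw [e1, e2]; ring
  have hexp : ∑ a, ∑ b, ∑ c, T a b c * sigmaT F v a b c i = S + A - B := by
    calc ∑ a, ∑ b, ∑ c, T a b c * sigmaT F v a b c i
        = ∑ a, ∑ b, ∑ c,
            ((1/2) * ((if i = c then (1:ℝ) else 0) * (T a b c * (v a * p b - v b * p a)))
            + (1/2) * ((if i = a then (1:ℝ) else 0) * (T a b c * (v c * p b - v b * p c)))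
            - (1/2) * ((if i = b then (1:ℝ) else 0) * (T a b c * (v c * p a - v a * p c)))) :=
          Finset.sum_congr rfl fun a _ => Finset.sum_congr rfl fun b _ =>
            Finset.sum_congr rfl fun c _ => hpt a b c
      _ = (1/2) * (∑ a, ∑ b, ∑ c, (if i = c then (1:ℝ) else 0) * (T a b c * (v a * p b - v b * p a)))
          + (1/2) * (∑ a, ∑ b, ∑ c, (if i = a then (1:ℝ) else 0) * (T a b c * (v c * p b - v b * p c)))
          - (1/2) * (∑ a, ∑ b, ∑ c, (if i = b then (1:ℝ) else 0) * (T a b c * (v c * p a - v a * p c))) := by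
          simp only [Finset.sum_sub_distrib, Finset.sum_add_distrib, ← Finset.mul_sum]
      _ = (1/2) * (2*S) + (1/2) * (A - B) - (1/2) * (B - A) := by rw [h1, h2, h3]
      _ = S + A - B := by ring
  rw [hL]
  have h2S : (2:ℝ) * (∑ a, ∑ b, ∑ c, if a < b then T a b c * sigmaT F v a b c i else 0)
      = S + A - B := by rw [← hfull, hexp]
  linarith
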